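/- arXiv:0904.3994 — 2 statements merged into one kernel-verified Lean document; each statement's English description precedes it below -/
import Mathlib

section
/- Let A be an n×m complex matrix with unit-norm columns, n < m. Then the coherence μ(A) = max_{i≠j} |⟨aᵢ, aⱼ⟩| satisfies the Welch lower bound μ(A) ≥ √((m - n)/(n(m - 1))). -/
/-!
Let `G = Aᴴ A` be the Gram matrix of the columns and `F = A Aᴴ`. Cycling the trace gives
`‖G‖_F² = tr (AᴴA AᴴA) = tr (AAᴴ AAᴴ) = ‖F‖_F²`. Since `F` is `n × n` with trace `m`,
Cauchy–Schwarz on its diagonal gives `m² ≤ n ‖F‖_F²`, while the unit diagonal of `G` and the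
coherence bound on its off-diagonal entries give `‖G‖_F² ≤ m (1 + (m - 1) μ²)`.
-/

open Matrix Finset

namespace Matrix

variable {ι κ 𝕜 : Type*} [Fintype ι] [RCLike 𝕜]

lemma trace_mul_conjTranspose_self [Fintype κ] (A : Matrix ι κ 𝕜) :
    trace (A * Aᴴ) = ((∑ i, ∑ j, ‖A i j‖ ^ 2 : ℝ) : 𝕜) := by
  simp [trace, mul_apply, RCLike.mul_conj]

lemma conjTranspose_mul_self_apply_self (A : Matrix ι κ 𝕜) (j : κ) :
    (Aᴴ * A) j j = ((∑ i, ‖A i j‖ ^ 2 : ℝ) : 𝕜) := by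
  simp [mul_apply, RCLike.conj_mul]

lemma sum_norm_sq_conjTranspose_mul_self [Fintype κ] (A : Matrix ι κ 𝕜) :
    ∑ i, ∑ j, ‖(Aᴴ * A) i j‖ ^ 2 = ∑ k, ∑ l, ‖(A * Aᴴ) k l‖ ^ 2 := by
  apply RCLike.ofReal_injective (K := 𝕜)
  rw [← trace_mul_conjTranspose_self, ← trace_mul_conjTranspose_self,
    (isHermitian_conjTranspose_mul_self A).eq, (isHermitian_mul_conjTranspose_self A).eq,
    Matrix.mul_assoc, trace_mul_comm]
  simp only [Matrix.mul_assoc]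

lemma norm_trace_sq_le_card_mul_sum_norm_sq (M : Matrix ι ι 𝕜) :
    ‖trace M‖ ^ 2 ≤ Fintype.card ι * ∑ i, ∑ j, ‖M i j‖ ^ 2 :=
  calc ‖trace M‖ ^ 2 ≤ (∑ i, ‖M i i‖) ^ 2 := by
        gcongr
        exact norm_sum_le _ _
    _ ≤ Fintype.card ι * ∑ i, ‖M i i‖ ^ 2 := sq_sum_le_card_mul_sum_sq
    _ ≤ Fintype.card ι * ∑ i, ∑ j, ‖M i j‖ ^ 2 := by
        gcongr with i
        exact single_le_sum (f := fun j => ‖M i j‖ ^ 2) (fun _ _ => by positivity) (mem_univ i)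

lemma sum_norm_sq_le_of_norm_le {μ : ℝ} (M : Matrix ι ι 𝕜) (hdiag : ∀ i, ‖M i i‖ ≤ 1)
    (hoff : ∀ i j, i ≠ j → ‖M i j‖ ≤ μ) :
    ∑ i, ∑ j, ‖M i j‖ ^ 2 ≤ Fintype.card ι * (1 + (Fintype.card ι - 1) * μ ^ 2) := by
  classical
  have hrow : ∀ i, ∑ j, ‖M i j‖ ^ 2 ≤ 1 + (Fintype.card ι - 1) * μ ^ 2 := by
    intro i
    rw [← add_sum_erase _ _ (mem_univ i)]
    gcongr
    · exact pow_le_one₀ (norm_nonneg _) (hdiag i)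
    · calc ∑ j ∈ univ.erase i, ‖M i j‖ ^ 2 ≤ ∑ _j ∈ univ.erase i, μ ^ 2 :=
            sum_le_sum fun j hj =>
              pow_le_pow_left₀ (norm_nonneg _) (hoff i j (ne_of_mem_erase hj).symm) 2
        _ = (Fintype.card ι - 1) * μ ^ 2 := by
            rw [sum_const, card_erase_of_mem (mem_univ i), card_univ, nsmul_eq_mul,
              Nat.cast_pred (Fintype.card_pos_iff.mpr ⟨i⟩)]
  exact (sum_le_sum fun i _ => hrow i).trans_eq (by simp [mul_add])

end Matrix

theorem welch_bound (n m : ℕ) (hn : 0 < n) (hnm : n < m)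
    (A : Matrix (Fin n) (Fin m) ℂ)
    (hcols : ∀ j, ∑ i, ‖A i j‖ ^ 2 = 1)
    (μ : ℝ)
    (hμ : ∀ i j : Fin m, i ≠ j → ‖∑ l, starRingEnd ℂ (A l i) * A l j‖ ≤ μ) :
    μ ≥ Real.sqrt ((m - n) / (n * (m - 1))) := by
  have hμ0 : 0 ≤ μ := (norm_nonneg _).trans (hμ ⟨0, by omega⟩ ⟨1, by omega⟩ (by simp))
  have htrace : trace (A * Aᴴ) = m := by
    simp [trace_mul_conjTranspose_self, sum_comm (γ := Fin n), hcols]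
  have hdiag : ∀ j, ‖(Aᴴ * A) j j‖ ≤ 1 := fun j => by
    simp [conjTranspose_mul_self_apply_self, hcols]
  have key : (m : ℝ) ^ 2 ≤ n * (m * (1 + (m - 1) * μ ^ 2)) :=
    calc (m : ℝ) ^ 2 = ‖trace (A * Aᴴ)‖ ^ 2 := by simp [htrace]
      _ ≤ n * ∑ k, ∑ l, ‖(A * Aᴴ) k l‖ ^ 2 := by
          simpa using norm_trace_sq_le_card_mul_sum_norm_sq (A * Aᴴ)
      _ = n * ∑ i, ∑ j, ‖(Aᴴ * A) i j‖ ^ 2 := by rw [sum_norm_sq_conjTranspose_mul_self]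
      _ ≤ n * (m * (1 + (m - 1) * μ ^ 2)) := by
          gcongr
          simpa using sum_norm_sq_le_of_norm_le (Aᴴ * A) hdiag hμ
  have hm : (1 : ℝ) ≤ m := by exact_mod_cast hnm.pos
  rw [ge_iff_le, Real.sqrt_le_left hμ0]
  exact div_le_of_le_mul₀ (by nlinarith) (sq_nonneg μ) (by nlinarith)
end

section
/- Let A be an n×m complex matrix and let A^{RM} be the n²×m matrix with entries A^{RM}_{(i,k),j} = A_{ij}·A_{kj} (indexing rows by pairs (i,k) ∈ {1..n}²). If the columns of A are unit vectors, then the column inner products satisfy ⟨a^{RM}_i, a^{RM}_j⟩ = ⟨aᵢ, aⱼ⟩², and hence the coherence satisfies μ(A^{RM}) = μ(A)². -/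
/-!
Column `j` of `A^{RM}` is `aⱼ ⊗ aⱼ`, and `⟨a ⊗ b, c ⊗ d⟩ = ⟨a, c⟩⟨b, d⟩`. The coherence identity
then holds because squaring is monotone on nonnegative reals, so it commutes with the maximum.
-/

open Matrix Finset

def Matrix.khatriRao {ι ι' κ R : Type*} [Mul R] (A : Matrix ι κ R) (B : Matrix ι' κ R) :
    Matrix (ι × ι') κ R :=
  fun p j => A p.1 j * B p.2 j

theorem Matrix.conjTranspose_khatriRao_mul_khatriRao {ι ι' κ R : Type*} [Fintype ι] [Fintype ι']
    [CommSemiring R] [StarRing R] (A C : Matrix ι κ R) (B D : Matrix ι' κ R) :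
    (A.khatriRao B)ᴴ * C.khatriRao D = (Aᴴ * C) ⊙ (Bᴴ * D) := by
  ext i j
  simp only [mul_apply, conjTranspose_apply, hadamard_apply, khatriRao, star_mul',
    Finset.sum_mul_sum, Fintype.sum_prod_type]
  exact Finset.sum_congr rfl fun _ _ => Finset.sum_congr rfl fun _ _ => by ring

theorem Finset.sup'_pow_of_nonneg {ι R : Type*} [Semiring R] [LinearOrder R] [IsOrderedRing R]
    {s : Finset ι} (hs : s.Nonempty) {f : ι → R} (hf : ∀ i ∈ s, 0 ≤ f i) (k : ℕ) :
    s.sup' hs (fun i => f i ^ k) = s.sup' hs f ^ k := by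
  obtain ⟨i, hi, hmax⟩ := exists_mem_eq_sup' hs f
  rw [hmax]
  refine le_antisymm (sup'_le hs _ fun j hj => ?_) (le_sup' (fun i => f i ^ k) hi)
  exact pow_le_pow_left₀ (hf j hj) (hmax ▸ le_sup' f hj) k

theorem rm_coherence_square_general (n m : ℕ)
    (A : Matrix (Fin n) (Fin m) ℂ)
    (ARM : Matrix (Fin n × Fin n) (Fin m) ℂ)
    (hARM : ∀ ik : Fin n × Fin n, ∀ j, ARM ik j = A ik.1 j * A ik.2 j)
    (hpairs : (Finset.univ.filter fun p : Fin m × Fin m => p.1 ≠ p.2).Nonempty) :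
    (∀ i j : Fin m,
      (∑ l, starRingEnd ℂ (ARM l i) * ARM l j) =
        (∑ l, starRingEnd ℂ (A l i) * A l j) ^ 2) ∧
    ((Finset.univ.filter fun p : Fin m × Fin m => p.1 ≠ p.2).sup' hpairs
        (fun p => ‖∑ l, starRingEnd ℂ (ARM l p.1) * ARM l p.2‖)) =
      ((Finset.univ.filter fun p : Fin m × Fin m => p.1 ≠ p.2).sup' hpairs
        (fun p => ‖∑ l, starRingEnd ℂ (A l p.1) * A l p.2‖)) ^ 2 := by
  have ARM_eq : ARM = A.khatriRao A := funext fun ik => funext (hARM ik)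
  have gram : ∀ i j : Fin m,
      (∑ l, starRingEnd ℂ (ARM l i) * ARM l j) = (∑ l, starRingEnd ℂ (A l i) * A l j) ^ 2 := by
    intro i j
    have entry := congr_fun₂ (conjTranspose_khatriRao_mul_khatriRao A A A A) i j
    simpa only [← ARM_eq, starRingEnd_apply, mul_apply, conjTranspose_apply, hadamard_apply, ← sq]
      using entry
  refine ⟨gram, ?_⟩
  simp only [gram, norm_pow]
  exact sup'_pow_of_nonneg hpairs (fun _ _ => norm_nonneg _) 2

theorem rm_coherence_square (n m : ℕ) (hm : 2 ≤ m)
    (A : Matrix (Fin n) (Fin m) ℂ)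
    (ARM : Matrix (Fin n × Fin n) (Fin m) ℂ)
    (hARM : ∀ ik : Fin n × Fin n, ∀ j, ARM ik j = A ik.1 j * A ik.2 j)
    (hcols : ∀ j, ∑ i, ‖A i j‖ ^ 2 = 1)
    (hpairs : (Finset.univ.filter fun p : Fin m × Fin m => p.1 ≠ p.2).Nonempty) :
    (∀ i j : Fin m,
      (∑ l, starRingEnd ℂ (ARM l i) * ARM l j) =
        (∑ l, starRingEnd ℂ (A l i) * A l j) ^ 2) ∧
    ((Finset.univ.filter fun p : Fin m × Fin m => p.1 ≠ p.2).sup' hpairs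
        (fun p => ‖∑ l, starRingEnd ℂ (ARM l p.1) * ARM l p.2‖)) =
      ((Finset.univ.filter fun p : Fin m × Fin m => p.1 ≠ p.2).sup' hpairs
        (fun p => ‖∑ l, starRingEnd ℂ (A l p.1) * A l p.2‖)) ^ 2 :=
  rm_coherence_square_general n m A ARM hARM hpairs
end
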